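/- For the Erdős–Rényi random graph G(n,p) with n >= 2 and integers m, l >= 1, the covariance of the number of (m+1)-stars centered at vertex 1 and the number of (l+1)-stars centered at vertex 2 equals C(n-2, m-1) * C(n-2, l-1) * p^{m+l-1} * (1-p). -/

import Mathlib

/-!
The star count at `v` is a sum of monomials `∏_{j ∈ A} X v j`, each a product of `|A|` independent
`Bernoulli(p)` edge indicators and hence of mean `p ^ |A|`. Indicators are idempotent, so the
product of two monomials is the monomial of the union of their edge sets. Stars at `v ≠ w` share
at most the edge `v w`, and they share it iff `w ∈ A` and `v ∈ B`; then
`E[∏_A ∏_B] - E[∏_A] E[∏_B] = p ^ (m + l - 1) - p ^ (m + l)`, otherwise the difference vanishes.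
Summing over the `C(n-2, m-1) C(n-2, l-1)` such pairs `(A, B)` gives the covariance.
-/

open MeasureTheory ProbabilityTheory Finset

theorem ProbabilityTheory.iIndepFun.integral_finset_prod_eq_prod_integral
    {Ω ι : Type*} [MeasurableSpace Ω] {μ : Measure Ω} {Y : ι → Ω → ℝ} (hY : iIndepFun Y μ)
    (mY : ∀ i, AEStronglyMeasurable (Y i) μ) (T : Finset ι) :
    ∫ ω, ∏ i ∈ T, Y i ω ∂μ = ∏ i ∈ T, ∫ ω, Y i ω ∂μ := by
  simp_rw [← Finset.prod_coe_sort T]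
  exact (hY.precomp Subtype.val_injective).integral_fun_prod_eq_prod_integral fun i => mY i

theorem Finset.prod_mul_prod_eq_prod_union_of_isIdempotentElem {ι M : Type*} [CommMonoid M]
    [DecidableEq ι] {s t : Finset ι} {f : ι → M} (hf : ∀ i ∈ s ∩ t, IsIdempotentElem (f i)) :
    (∏ i ∈ s, f i) * ∏ i ∈ t, f i = ∏ i ∈ s ∪ t, f i := by
  have he : IsIdempotentElem (∏ i ∈ s ∩ t, f i) :=
    Finset.prod_induction f IsIdempotentElem (fun _ _ ha hb => ha.mul hb) .one hf
  rw [← prod_union_inter, ← prod_sdiff (inter_subset_union : s ∩ t ⊆ s ∪ t), mul_assoc, he.eq]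

theorem Finset.sum_sum_ite_and {ι κ : Type*} (s : Finset ι) (t : Finset κ) (P : ι → Prop)
    (Q : κ → Prop) [DecidablePred P] [DecidablePred Q] (c : ℝ) :
    ∑ a ∈ s, ∑ b ∈ t, (if P a ∧ Q b then c else 0) = #(s.filter P) * #(t.filter Q) * c := by
  simp_rw [ite_and]
  simp [sum_ite, mul_comm, mul_left_comm]

theorem Finset.card_filter_mem_powersetCard {α : Type*} [DecidableEq α] {s : Finset α} {a : α}
    (ha : a ∈ s) {m : ℕ} (hm : 1 ≤ m) :
    #((s.powersetCard m).filter (a ∈ ·)) = (#s - 1).choose (m - 1) := by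
  simpa only [singleton_subset_iff, card_singleton] using
    card_filter_powersetCard_subset {a} s m (singleton_subset_iff.2 ha) hm

theorem Finset.notMem_of_mem_powersetCard_erase {α : Type*} [DecidableEq α] [Fintype α]
    {v : α} {m : ℕ} {A : Finset α} (hA : A ∈ (univ.erase v).powersetCard m) : v ∉ A :=
  fun hv => notMem_erase v univ ((mem_powersetCard.1 hA).1 hv)

section ZeroOne

variable {Ω : Type*} [MeasurableSpace Ω] {μ : Measure Ω}

theorem integral_eq_of_eq_zero_or_one {f : Ω → ℝ} (hf : Measurable f)
    (h01 : ∀ ω, f ω = 0 ∨ f ω = 1) {p : ℝ} (hp : 0 ≤ p)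
    (hμ : μ {ω | f ω = 1} = ENNReal.ofReal p) :
    ∫ ω, f ω ∂μ = p := by
  have hs : MeasurableSet {ω | f ω = 1} := hf (measurableSet_singleton 1)
  have hf_eq : f = Set.indicator {ω | f ω = 1} 1 := by
    funext ω
    rcases h01 ω with h | h <;> simp [Set.indicator, h]
  rw [hf_eq, integral_indicator_one hs, measureReal_def, hμ,
    ENNReal.toReal_ofReal hp]

theorem integrable_finset_prod_of_eq_zero_or_one [IsFiniteMeasure μ] {ι : Type*}
    {Y : ι → Ω → ℝ} (hY : ∀ i, Measurable (Y i)) (h01 : ∀ i ω, Y i ω = 0 ∨ Y i ω = 1)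
    (T : Finset ι) :
    Integrable (fun ω => ∏ i ∈ T, Y i ω) μ := by
  refine .of_bound (Finset.measurable_prod T fun i _ => hY i).aestronglyMeasurable 1
    (ae_of_all _ fun ω => ?_)
  rw [norm_prod]
  exact prod_le_one (fun _ _ => norm_nonneg _) fun i _ => by rcases h01 i ω with h | h <;> simp [h]

end ZeroOne

section Stars

variable {α : Type*} [LinearOrder α]

/-- The edge `{i, j}` as an ordered pair, the indexing of the edge indicators in `G(n,p)`. -/
def edge (i j : α) : α × α := (min i j, max i j)

theorem edge_injective (v : α) : Function.Injective (edge v) := by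
  intro j k h
  simp only [edge, Prod.mk.injEq] at h
  grind

theorem edge_eq_edge_iff {v w j k : α} (hvw : v ≠ w) : edge v j = edge w k ↔ j = w ∧ k = v := by
  simp only [edge, Prod.mk.injEq]
  grind

theorem edge_fst_lt_snd {i j : α} (hij : i ≠ j) : (edge i j).1 < (edge i j).2 := min_lt_max.2 hij

theorem apply_edge_of_symm {β : Type*} {X : α → α → β} (hsym : ∀ i j, X i j = X j i) (i j : α) :
    X (edge i j).1 (edge i j).2 = X i j := by
  rcases le_total i j with h | h <;> simp [edge, h, hsym i j]

variable [DecidableEq α]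

def starEdges (v : α) (A : Finset α) : Finset (α × α) := A.image (edge v)

theorem card_starEdges (v : α) (A : Finset α) : #(starEdges v A) = #A :=
  card_image_of_injective A (edge_injective v)

theorem fst_lt_snd_of_mem_starEdges {v : α} {A : Finset α} (hv : v ∉ A) {q : α × α}
    (hq : q ∈ starEdges v A) : q.1 < q.2 := by
  obtain ⟨j, hj, rfl⟩ := mem_image.1 hq
  exact edge_fst_lt_snd fun h => hv (h ▸ hj)

theorem starEdges_inter_starEdges {v w : α} (hvw : v ≠ w) (A B : Finset α) :
    starEdges v A ∩ starEdges w B = if w ∈ A ∧ v ∈ B then {edge v w} else ∅ := by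
  ext q
  simp only [starEdges, mem_inter, mem_image]
  constructor
  · rintro ⟨⟨j, hj, rfl⟩, k, hk, hkj⟩
    obtain ⟨rfl, rfl⟩ := (edge_eq_edge_iff hvw).1 hkj.symm
    simp [hj, hk]
  · split_ifs with h
    · rintro hq
      rw [mem_singleton.1 hq]
      exact ⟨⟨w, h.1, rfl⟩, v, h.2, (edge_eq_edge_iff hvw.symm).2 ⟨rfl, rfl⟩⟩
    · simp

theorem card_starEdges_union_add {v w : α} (hvw : v ≠ w) (A B : Finset α) :
    #(starEdges v A ∪ starEdges w B) + (if w ∈ A ∧ v ∈ B then 1 else 0) = #A + #B := by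
  have h := card_union_add_card_inter (starEdges v A) (starEdges w B)
  rw [starEdges_inter_starEdges hvw, card_starEdges, card_starEdges] at h
  split_ifs at h ⊢ <;> simpa using h

theorem prod_eq_prod_starEdges {M : Type*} [CommMonoid M] {X : α → α → M}
    (hsym : ∀ i j, X i j = X j i) (v : α) (A : Finset α) :
    ∏ j ∈ A, X v j = ∏ q ∈ starEdges v A, X q.1 q.2 := by
  rw [starEdges, prod_image fun j _ k _ h => edge_injective v h]
  exact prod_congr rfl fun j _ => (apply_edge_of_symm hsym v j).symm

theorem pow_card_starEdges_union_sub {v w : α} (hvw : v ≠ w) (A B : Finset α) (p : ℝ) :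
    p ^ #(starEdges v A ∪ starEdges w B) - p ^ #A * p ^ #B =
      if w ∈ A ∧ v ∈ B then p ^ (#A + #B - 1) * (1 - p) else 0 := by
  have h := card_starEdges_union_add hvw A B
  rw [← pow_add]
  split_ifs at h ⊢ with hc
  · have hA : 1 ≤ #A := card_pos.2 ⟨w, hc.1⟩
    rw [← h, Nat.add_sub_cancel, pow_succ]
    ring
  · simp [← h]

variable [Fintype α]

/-- `S_{m+1,n}^{(v)}`: `A` runs over the `m` leaves of an `(m+1)`-star centered at `v`. -/
def starCount {Ω : Type*} (X : α → α → Ω → ℝ) (v : α) (m : ℕ) (ω : Ω) : ℝ :=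
  ∑ A ∈ (univ.erase v).powersetCard m, ∏ j ∈ A, X v j ω

variable {Ω : Type*} {X : α → α → Ω → ℝ}

theorem starCount_eq_sum_prod_starEdges (hsym : ∀ i j, X i j = X j i) (v : α) (m : ℕ) (ω : Ω) :
    starCount X v m ω =
      ∑ A ∈ (univ.erase v).powersetCard m, ∏ q ∈ starEdges v A, X q.1 q.2 ω := by
  refine sum_congr rfl fun A _ => ?_
  exact prod_eq_prod_starEdges (X := fun i j => X i j ω) (fun i j => congrFun (hsym i j) ω) v A

theorem starCount_mul_starCount (hsym : ∀ i j, X i j = X j i)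
    (h01 : ∀ i j ω, X i j ω = 0 ∨ X i j ω = 1) (v w : α) (m l : ℕ) (ω : Ω) :
    starCount X v m ω * starCount X w l ω =
      ∑ A ∈ (univ.erase v).powersetCard m, ∑ B ∈ (univ.erase w).powersetCard l,
        ∏ q ∈ starEdges v A ∪ starEdges w B, X q.1 q.2 ω := by
  rw [starCount_eq_sum_prod_starEdges hsym, starCount_eq_sum_prod_starEdges hsym, sum_mul_sum]
  exact sum_congr rfl fun A _ => sum_congr rfl fun B _ =>
    prod_mul_prod_eq_prod_union_of_isIdempotentElem fun q _ =>
      IsIdempotentElem.iff_eq_zero_or_one.2 (h01 q.1 q.2 ω)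

end Stars

section RandomGraph

variable {α Ω : Type*} [LinearOrder α] [MeasurableSpace Ω] {μ : Measure Ω}
  {X : α → α → Ω → ℝ} {p : ℝ}

theorem integral_prod_edges (hmeas : ∀ i j, Measurable (X i j))
    (h01 : ∀ i j ω, X i j ω = 0 ∨ X i j ω = 1)
    (hbern : ∀ i j, i ≠ j → μ {ω | X i j ω = 1} = ENNReal.ofReal p) (hp : 0 ≤ p)
    (hindep : iIndepFun (fun (q : {q : α × α // q.1 < q.2}) ω => X q.1.1 q.1.2 ω) μ)
    {T : Finset (α × α)} (hT : ∀ q ∈ T, q.1 < q.2) :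
    ∫ ω, ∏ q ∈ T, X q.1 q.2 ω ∂μ = p ^ #T := by
  have hsub (ω : Ω) : ∏ q ∈ T, X q.1 q.2 ω =
      ∏ q ∈ T.subtype (fun q : α × α => q.1 < q.2), X q.1.1 q.1.2 ω :=
    (prod_subtype_of_mem (fun q : α × α => X q.1 q.2 ω) hT).symm
  simp_rw [hsub]
  rw [hindep.integral_finset_prod_eq_prod_integral fun q => (hmeas _ _).aestronglyMeasurable,
    prod_congr rfl fun q _ => integral_eq_of_eq_zero_or_one (hmeas _ _) (h01 _ _) hp
      (hbern _ _ q.2.ne), prod_const, card_subtype, filter_true_of_mem hT]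

theorem integral_sum_prod_edges (hmeas : ∀ i j, Measurable (X i j))
    (h01 : ∀ i j ω, X i j ω = 0 ∨ X i j ω = 1)
    (hbern : ∀ i j, i ≠ j → μ {ω | X i j ω = 1} = ENNReal.ofReal p) (hp : 0 ≤ p)
    (hindep : iIndepFun (fun (q : {q : α × α // q.1 < q.2}) ω => X q.1.1 q.1.2 ω) μ)
    {κ : Type*} (K : Finset κ) {T : κ → Finset (α × α)} (hT : ∀ k ∈ K, ∀ q ∈ T k, q.1 < q.2) :
    ∫ ω, ∑ k ∈ K, ∏ q ∈ T k, X q.1 q.2 ω ∂μ = ∑ k ∈ K, p ^ #(T k) := by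
  have := hindep.isProbabilityMeasure
  rw [integral_finsetSum K fun k _ => integrable_finset_prod_of_eq_zero_or_one
    (fun q => hmeas q.1 q.2) (fun q => h01 q.1 q.2) (T k)]
  exact sum_congr rfl fun k hk => integral_prod_edges hmeas h01 hbern hp hindep (hT k hk)

variable [DecidableEq α] [Fintype α]

theorem integral_starCount (hmeas : ∀ i j, Measurable (X i j)) (hsym : ∀ i j, X i j = X j i)
    (h01 : ∀ i j ω, X i j ω = 0 ∨ X i j ω = 1)
    (hbern : ∀ i j, i ≠ j → μ {ω | X i j ω = 1} = ENNReal.ofReal p) (hp : 0 ≤ p)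
    (hindep : iIndepFun (fun (q : {q : α × α // q.1 < q.2}) ω => X q.1.1 q.1.2 ω) μ)
    (v : α) (m : ℕ) :
    ∫ ω, starCount X v m ω ∂μ = ∑ A ∈ (univ.erase v).powersetCard m, p ^ #A := by
  simp_rw [starCount_eq_sum_prod_starEdges hsym]
  rw [integral_sum_prod_edges hmeas h01 hbern hp hindep _ fun A hA _ =>
    fst_lt_snd_of_mem_starEdges (notMem_of_mem_powersetCard_erase hA)]
  simp_rw [card_starEdges]

theorem integral_starCount_mul_starCount (hmeas : ∀ i j, Measurable (X i j))
    (hsym : ∀ i j, X i j = X j i) (h01 : ∀ i j ω, X i j ω = 0 ∨ X i j ω = 1)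
    (hbern : ∀ i j, i ≠ j → μ {ω | X i j ω = 1} = ENNReal.ofReal p) (hp : 0 ≤ p)
    (hindep : iIndepFun (fun (q : {q : α × α // q.1 < q.2}) ω => X q.1.1 q.1.2 ω) μ)
    (v w : α) (m l : ℕ) :
    ∫ ω, starCount X v m ω * starCount X w l ω ∂μ =
      ∑ A ∈ (univ.erase v).powersetCard m, ∑ B ∈ (univ.erase w).powersetCard l,
        p ^ #(starEdges v A ∪ starEdges w B) := by
  simp_rw [starCount_mul_starCount hsym h01, ← sum_product']
  rw [integral_sum_prod_edges hmeas h01 hbern hp hindep _ fun AB hAB q hq => ?_]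
  obtain ⟨hA, hB⟩ := mem_product.1 hAB
  rcases mem_union.1 hq with hq | hq
  exacts [fst_lt_snd_of_mem_starEdges (notMem_of_mem_powersetCard_erase hA) hq,
    fst_lt_snd_of_mem_starEdges (notMem_of_mem_powersetCard_erase hB) hq]

theorem integral_starCount_mul_starCount_sub (hmeas : ∀ i j, Measurable (X i j))
    (hsym : ∀ i j, X i j = X j i) (h01 : ∀ i j ω, X i j ω = 0 ∨ X i j ω = 1)
    (hbern : ∀ i j, i ≠ j → μ {ω | X i j ω = 1} = ENNReal.ofReal p) (hp : 0 ≤ p)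
    (hindep : iIndepFun (fun (q : {q : α × α // q.1 < q.2}) ω => X q.1.1 q.1.2 ω) μ)
    {v w : α} (hvw : v ≠ w) {m l : ℕ} (hm : 1 ≤ m) (hl : 1 ≤ l) :
    ∫ ω, starCount X v m ω * starCount X w l ω ∂μ -
        (∫ ω, starCount X v m ω ∂μ) * ∫ ω, starCount X w l ω ∂μ =
      (Fintype.card α - 2).choose (m - 1) * (Fintype.card α - 2).choose (l - 1) *
        p ^ (m + l - 1) * (1 - p) := by
  rw [integral_starCount_mul_starCount hmeas hsym h01 hbern hp hindep,
    integral_starCount hmeas hsym h01 hbern hp hindep,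
    integral_starCount hmeas hsym h01 hbern hp hindep, sum_mul_sum, ← sum_sub_distrib]
  have hcount {u u' : α} (hu : u ≠ u') {k : ℕ} (hk : 1 ≤ k) :
      #(((univ.erase u).powersetCard k).filter (u' ∈ ·)) =
        (Fintype.card α - 2).choose (k - 1) := by
    rw [card_filter_mem_powersetCard (mem_erase.2 ⟨hu.symm, mem_univ u'⟩) hk,
      card_erase_of_mem (mem_univ u), card_univ, Nat.sub_sub]
  calc _ = ∑ A ∈ (univ.erase v).powersetCard m, ∑ B ∈ (univ.erase w).powersetCard l,
        if w ∈ A ∧ v ∈ B then p ^ (m + l - 1) * (1 - p) else 0 := by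
          refine sum_congr rfl fun A hA => ?_
          rw [← sum_sub_distrib]
          refine sum_congr rfl fun B hB => ?_
          rw [pow_card_starEdges_union_sub hvw, (mem_powersetCard.1 hA).2,
            (mem_powersetCard.1 hB).2]
    _ = _ := by
      rw [sum_sum_ite_and, hcount hvw hm, hcount hvw.symm hl]
      ring

end RandomGraph

/-- Covariance of the number of `(m+1)`-stars centered at vertex `1` and the number of
`(l+1)`-stars centered at vertex `2` in `G(n,p)`:
`Cov = C(n-2, m-1) C(n-2, l-1) p^{m+l-1} (1-p)`. -/
theorem stmt_6 (n m l : ℕ) (hn : 2 ≤ n) (hm : 1 ≤ m) (hl : 1 ≤ l)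
    (p : ℝ) (hp0 : 0 ≤ p)
    {Ω : Type*} [MeasurableSpace Ω] (μ : Measure Ω)
    (X : Fin n → Fin n → Ω → ℝ)
    (hmeas : ∀ i j, Measurable (X i j))
    (hsym : ∀ i j, X i j = X j i)
    (h01 : ∀ i j ω, X i j ω = 0 ∨ X i j ω = 1)
    (hbern : ∀ i j, i ≠ j → μ {ω | X i j ω = 1} = ENNReal.ofReal p)
    (hindep : iIndepFun
      (fun (q : {q : Fin n × Fin n // q.1 < q.2}) ω => X q.1.1 q.1.2 ω) μ)
    (v1 v2 : Fin n) (hv1 : v1 = ⟨0, by omega⟩) (hv2 : v2 = ⟨1, by omega⟩) :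
    (∫ ω, (∑ A ∈ (Finset.univ.erase v1).powersetCard m, ∏ j ∈ A, X v1 j ω) *
          (∑ B ∈ (Finset.univ.erase v2).powersetCard l, ∏ j ∈ B, X v2 j ω) ∂μ) -
      (∫ ω, ∑ A ∈ (Finset.univ.erase v1).powersetCard m, ∏ j ∈ A, X v1 j ω ∂μ) *
      (∫ ω, ∑ B ∈ (Finset.univ.erase v2).powersetCard l, ∏ j ∈ B, X v2 j ω ∂μ) =
      ((n - 2).choose (m - 1)) * ((n - 2).choose (l - 1)) * p ^ (m + l - 1) * (1 - p) := by
  have hv : v1 ≠ v2 := by simp [hv1, hv2]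
  simpa only [starCount, Fintype.card_fin] using
    integral_starCount_mul_starCount_sub hmeas hsym h01 hbern hp0 hindep hv hm hl
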